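/- arXiv:1006.2145 — 2 statements merged into one kernel-verified Lean document; each statement's English description precedes it below -/
import Mathlib

section
/- The map R̄_{α,β}: ((x₁,x₂),(y₁,y₂)) ↦ ((y₁ − (α−β)x₁/(1+x₁y₂), y₂), (x₁, x₂ + (α−β)y₂/(1+x₁y₂))) satisfies the parametric set-theoretic Yang–Baxter equation R̄²³_{β,γ} ∘ R̄¹³_{α,γ} ∘ R̄¹²_{α,β} = R̄¹²_{α,β} ∘ R̄¹³_{α,γ} ∘ R̄²³_{β,γ}. -/
/-- The Yang–Baxter map `R̄_{α,β}` on `ℂ² × ℂ²`. -/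
noncomputable def rbar (a b : ℂ) (p : (ℂ × ℂ) × (ℂ × ℂ)) : (ℂ × ℂ) × (ℂ × ℂ) :=
  ((p.2.1 - (a - b) * p.1.1 / (1 + p.1.1 * p.2.2), p.2.2),
   (p.1.1, p.1.2 + (a - b) * p.2.2 / (1 + p.1.1 * p.2.2)))

/-- The denominator of `R̄` at a point of `ℂ² × ℂ²`. -/
def rden (p : (ℂ × ℂ) × (ℂ × ℂ)) : ℂ := 1 + p.1.1 * p.2.2

/-- Action on the factors 1,2 of `(ℂ²)³`. -/
noncomputable def act12 (f : (ℂ × ℂ) × (ℂ × ℂ) → (ℂ × ℂ) × (ℂ × ℂ)) :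
    (ℂ × ℂ) × (ℂ × ℂ) × (ℂ × ℂ) → (ℂ × ℂ) × (ℂ × ℂ) × (ℂ × ℂ) :=
  fun p => ((f (p.1, p.2.1)).1, (f (p.1, p.2.1)).2, p.2.2)

/-- Action on the factors 1,3 of `(ℂ²)³`. -/
noncomputable def act13 (f : (ℂ × ℂ) × (ℂ × ℂ) → (ℂ × ℂ) × (ℂ × ℂ)) :
    (ℂ × ℂ) × (ℂ × ℂ) × (ℂ × ℂ) → (ℂ × ℂ) × (ℂ × ℂ) × (ℂ × ℂ) :=
  fun p => ((f (p.1, p.2.2)).1, p.2.1, (f (p.1, p.2.2)).2)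

/-- Action on the factors 2,3 of `(ℂ²)³`. -/
noncomputable def act23 (f : (ℂ × ℂ) × (ℂ × ℂ) → (ℂ × ℂ) × (ℂ × ℂ)) :
    (ℂ × ℂ) × (ℂ × ℂ) × (ℂ × ℂ) → (ℂ × ℂ) × (ℂ × ℂ) × (ℂ × ℂ) :=
  fun p => (p.1, f p.2)

/-!
Write `d = rden (x, y)`, `g = rden (y, z)`, `E = d g - (α - β) x₁ z₂` and
`F = d g + (β - γ) x₁ z₂` (`E` and `F` are `rden3 (b - a)` and `rden3 (b - c)`). The three
denominators met along the left-hand side are `d`, `E / d`, `d F / E`, and along the right-hand side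
`g`, `F / g`, `g E / F`. Once they are rewritten in this form, both sides clear denominators to the
same explicit point `ybValue`.
-/

def rden3 (k : ℂ) (x y z : ℂ × ℂ) : ℂ := rden (x, y) * rden (y, z) + k * x.1 * z.2

section
variable (a b c : ℂ) (x y z : ℂ × ℂ)

lemma rbar_fst_fst : (rbar a b (x, y)).1.1 = y.1 - (a - b) * x.1 / rden (x, y) := rfl
lemma rbar_fst_snd : (rbar a b (x, y)).1.2 = y.2 := rfl
lemma rbar_snd_fst : (rbar a b (x, y)).2.1 = x.1 := rfl
lemma rbar_snd_snd : (rbar a b (x, y)).2.2 = x.2 + (a - b) * y.2 / rden (x, y) := rfl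

lemma rden_rbar_swap : rden ((rbar a b (x, y)).2, (rbar a b (x, y)).1) = rden (x, y) := rfl

lemma rden_rbar_fst (h : rden (x, y) ≠ 0) :
    rden ((rbar a b (x, y)).1, z) = rden3 (b - a) x y z / rden (x, y) := by
  rw [rden, rbar_fst_fst, rden3]
  set d := rden (x, y)
  simp only [rden]
  field_simp
  ring

lemma rden_rbar_snd (h : rden (y, z) ≠ 0) :
    rden (x, (rbar b c (y, z)).2) = rden3 (b - c) x y z / rden (y, z) := by
  rw [rden, rbar_snd_snd, rden3]
  set g := rden (y, z)
  simp only [rden]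
  field_simp
  ring

end

noncomputable def ybValue (a b c : ℂ) (x y z : ℂ × ℂ) : (ℂ × ℂ) × (ℂ × ℂ) × (ℂ × ℂ) :=
  ((z.1 - (a - c) * (y.1 * rden (x, y) - (a - b) * x.1) / rden3 (b - a) x y z, z.2),
   ((rden (y, z) * (y.1 * rden (x, y) - (a - b) * x.1) - (b - c) * x.1) / rden3 (b - c) x y z,
     y.2 + (a - c) * rden (x, y) * z.2 / rden3 (b - a) x y z),
   (x.1, x.2 + (a - c) * (rden (y, z) * y.2 + (b - c) * z.2) / rden3 (b - c) x y z))

section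
variable {a b c : ℂ} {x y z : ℂ × ℂ}

lemma act23_act13_act12_rbar_eq (hd : rden (x, y) ≠ 0) (hE : rden3 (b - a) x y z ≠ 0)
    (hF : rden3 (b - c) x y z ≠ 0) :
    act23 (rbar b c) (act13 (rbar a c) (act12 (rbar a b) (x, y, z))) = ybValue a b c x y z := by
  have he := rden_rbar_fst a b x y z hd
  have hf : rden ((rbar a b (x, y)).2, (rbar a c ((rbar a b (x, y)).1, z)).2) =
      rden (x, y) * rden3 (b - c) x y z / rden3 (b - a) x y z := by
    rw [rden_rbar_snd _ _ _ _ _ (he ▸ div_ne_zero hE hd), rden3, rden_rbar_swap, he]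
    field_simp
    simp only [rden3, rbar_snd_fst]
    ring
  ext <;> simp only [act12, act13, act23, ybValue, rbar_fst_fst, rbar_fst_snd, rbar_snd_fst,
    rbar_snd_snd, hf, he] <;> field_simp <;> simp only [rden3, rden] <;> ring

lemma act12_act13_act23_rbar_eq (hg : rden (y, z) ≠ 0) (hE : rden3 (b - a) x y z ≠ 0)
    (hF : rden3 (b - c) x y z ≠ 0) :
    act12 (rbar a b) (act13 (rbar a c) (act23 (rbar b c) (x, y, z))) = ybValue a b c x y z := by
  have hh := rden_rbar_snd b c x y z hg
  have hl : rden ((rbar a c (x, (rbar b c (y, z)).2)).1, (rbar b c (y, z)).1) =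
      rden (y, z) * rden3 (b - a) x y z / rden3 (b - c) x y z := by
    rw [rden_rbar_fst _ _ _ _ _ (hh ▸ div_ne_zero hF hg), rden3, rden_rbar_swap, hh]
    field_simp
    simp only [rden3, rbar_fst_snd]
    ring
  ext <;> simp only [act12, act13, act23, ybValue, rbar_fst_fst, rbar_fst_snd, rbar_snd_fst,
    rbar_snd_snd, hh, hl] <;> field_simp <;> simp only [rden3, rden] <;> ring

end

theorem stmt10_general (a b c : ℂ) (p : (ℂ × ℂ) × (ℂ × ℂ) × (ℂ × ℂ))
    (h1 : rden (p.1, p.2.1) ≠ 0)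
    (h2 : rden ((act12 (rbar a b) p).1, (act12 (rbar a b) p).2.2) ≠ 0)
    (h4 : rden (p.2.1, p.2.2) ≠ 0)
    (h5 : rden ((act23 (rbar b c) p).1, (act23 (rbar b c) p).2.2) ≠ 0) :
    act23 (rbar b c) (act13 (rbar a c) (act12 (rbar a b) p)) =
      act12 (rbar a b) (act13 (rbar a c) (act23 (rbar b c) p)) := by
  obtain ⟨x, y, z⟩ := p
  have hE : rden3 (b - a) x y z ≠ 0 := by
    have h : rden ((rbar a b (x, y)).1, z) ≠ 0 := h2
    rw [rden_rbar_fst a b x y z h1] at h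
    exact (div_ne_zero_iff.mp h).1
  have hF : rden3 (b - c) x y z ≠ 0 := by
    have h : rden (x, (rbar b c (y, z)).2) ≠ 0 := h5
    rw [rden_rbar_snd b c x y z h4] at h
    exact (div_ne_zero_iff.mp h).1
  rw [act23_act13_act12_rbar_eq h1 hE hF, act12_act13_act23_rbar_eq h4 hE hF]

/-- `R̄` satisfies the parametric set-theoretic Yang–Baxter equation on the
domain where all the denominators appearing in both compositions are nonzero. -/
theorem stmt10 (a b c : ℂ) (p : (ℂ × ℂ) × (ℂ × ℂ) × (ℂ × ℂ))
    (h1 : rden (p.1, p.2.1) ≠ 0)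
    (h2 : rden ((act12 (rbar a b) p).1, (act12 (rbar a b) p).2.2) ≠ 0)
    (h3 : rden ((act13 (rbar a c) (act12 (rbar a b) p)).2.1,
                (act13 (rbar a c) (act12 (rbar a b) p)).2.2) ≠ 0)
    (h4 : rden (p.2.1, p.2.2) ≠ 0)
    (h5 : rden ((act23 (rbar b c) p).1, (act23 (rbar b c) p).2.2) ≠ 0)
    (h6 : rden ((act13 (rbar a c) (act23 (rbar b c) p)).1,
                (act13 (rbar a c) (act23 (rbar b c) p)).2.1) ≠ 0) :
    act23 (rbar b c) (act13 (rbar a c) (act12 (rbar a b) p)) =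
      act12 (rbar a b) (act13 (rbar a c) (act23 (rbar b c) p)) :=
  stmt10_general a b c p h1 h2 h4 h5
end

section
/- Define the map S_{α,β}: ((x₁,x₂),(y₁,y₂)) ↦ ((u₁,u₂),(v₁,v₂)) where v₁ = x₂ + y₁, v₂ = x₁/x₂ − (α + β(x₂y₂ − x₁))/(x₂(x₂y₂ − x₁ − β + 1)), u₁ = y₂y₁ − x₁y₁/x₂ + (α + β(x₂y₂ − x₁))(x₂ + y₁)/(x₂(x₂y₂ − x₁ − β + 1)), u₂ = −(α(x₂+y₁)² + (βx₂ + y₁y₂x₂ − x₁y₁ + y₁)(x₂(β + y₁y₂ − 1) − x₁y₁))/(x₂(x₂y₂ − x₁ − β + 1)). Then with L₁(x₁,x₂;α,ζ) = [[x₁ − ζ, x₂],[−(α+(x₁−1)x₁)/x₂, 1−x₁−ζ]] and L₂(x₁,x₂;β,ζ) = [[x₁x₂+β−ζ, x₁],[x₂, 1]], one has L₁(u₁,u₂;α,ζ)L₂(v₁,v₂;β,ζ) = L₂(y₁,y₂;β,ζ)L₁(x₁,x₂;α,ζ) for all ζ. -/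
open Matrix

/-- The Lax matrix `L₁(x₁,x₂;α,ζ)`. -/
noncomputable def L1mat (x₁ x₂ a ζ : ℂ) : Matrix (Fin 2) (Fin 2) ℂ :=
  !![x₁ - ζ, x₂; -(a + (x₁ - 1) * x₁) / x₂, 1 - x₁ - ζ]

/-- The Lax matrix `L₂(x₁,x₂;β,ζ)`. -/
def L2mat (x₁ x₂ b ζ : ℂ) : Matrix (Fin 2) (Fin 2) ℂ :=
  !![x₁ * x₂ + b - ζ, x₁; x₂, 1]

/-!
Comparing the coefficients of `ζ` and the constant terms of the two products, `v₁`, `u₁`, `u₂`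
and `v₂` are read off from four of the entry equations, each of them linear in the unknown it
determines. What is left is one compatibility condition, which makes the lower-left entry of
`L₁(u₁,u₂)` equal to `y₂ - v₂`; for the map `S_{α,β}` it is a polynomial identity once the
denominators are cleared.
-/

theorem L1mat_mul_L2mat_eq_L2mat_mul_L1mat {a b u₁ u₂ v₁ v₂ x₁ x₂ y₁ y₂ : ℂ}
    (hv₁ : v₁ = x₂ + y₁) (hu₁ : u₁ = x₁ + y₁ * y₂ - v₁ * v₂)
    (hu₂ : u₂ = (y₁ * y₂ + b) * x₂ + y₁ * (1 - x₁) - u₁ * v₁)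
    (hv₂ : v₂ * (x₂ * y₂ - x₁ - b + 1) = y₂ * (x₁ - b) - (a + (x₁ - 1) * x₁) / x₂)
    (hu₂_ne : u₂ ≠ 0) (hcompat : a + (u₁ - 1) * u₁ = (v₂ - y₂) * u₂) (ζ : ℂ) :
    L1mat u₁ u₂ a ζ * L2mat v₁ v₂ b ζ = L2mat y₁ y₂ b ζ * L1mat x₁ x₂ a ζ := by
  have hc : -(a + (u₁ - 1) * u₁) / u₂ = y₂ - v₂ := by
    rw [hcompat, div_eq_iff hu₂_ne]
    ring
  rw [L1mat, L1mat, L2mat, L2mat, mul_fin_two, mul_fin_two, hc]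
  subst hu₂ hu₁ hv₁
  congr 1
  refine vec2_eq (vec2_eq ?_ ?_) (vec2_eq ?_ ?_)
  · linear_combination y₁ * hv₂
  · ring
  · linear_combination hv₂
  · ring

namespace Smap

noncomputable def den (b x₁ x₂ y₂ : ℂ) : ℂ := x₂ * (x₂ * y₂ - x₁ - b + 1)

noncomputable def u₁ (a b x₁ x₂ y₁ y₂ : ℂ) : ℂ :=
  y₂ * y₁ - x₁ * y₁ / x₂ + (a + b * (x₂ * y₂ - x₁)) * (x₂ + y₁) / den b x₁ x₂ y₂

noncomputable def u₂ (a b x₁ x₂ y₁ y₂ : ℂ) : ℂ :=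
  -(a * (x₂ + y₁) ^ 2 +
      (b * x₂ + y₁ * y₂ * x₂ - x₁ * y₁ + y₁) * (x₂ * (b + y₁ * y₂ - 1) - x₁ * y₁)) /
    den b x₁ x₂ y₂

def v₁ (x₂ y₁ : ℂ) : ℂ := x₂ + y₁

noncomputable def v₂ (a b x₁ x₂ y₂ : ℂ) : ℂ :=
  x₁ / x₂ - (a + b * (x₂ * y₂ - x₁)) / den b x₁ x₂ y₂

variable {a b x₁ x₂ y₁ y₂ : ℂ}

theorem u₁_eq (hx₂ : x₂ ≠ 0) :
    u₁ a b x₁ x₂ y₁ y₂ = x₁ + y₁ * y₂ - v₁ x₂ y₁ * v₂ a b x₁ x₂ y₂ := by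
  unfold u₁ v₁ v₂
  field_simp
  ring

theorem u₂_eq (hx₂ : x₂ ≠ 0) (hden : x₂ * y₂ - x₁ - b + 1 ≠ 0) :
    u₂ a b x₁ x₂ y₁ y₂ =
      (y₁ * y₂ + b) * x₂ + y₁ * (1 - x₁) - u₁ a b x₁ x₂ y₁ y₂ * v₁ x₂ y₁ := by
  unfold u₂ u₁ v₁ den
  field_simp
  ring

theorem v₂_mul_eq (hx₂ : x₂ ≠ 0) (hden : x₂ * y₂ - x₁ - b + 1 ≠ 0) :
    v₂ a b x₁ x₂ y₂ * (x₂ * y₂ - x₁ - b + 1) =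
      y₂ * (x₁ - b) - (a + (x₁ - 1) * x₁) / x₂ := by
  unfold v₂ den
  field_simp
  ring

theorem compatibility (hx₂ : x₂ ≠ 0) (hden : x₂ * y₂ - x₁ - b + 1 ≠ 0) :
    a + (u₁ a b x₁ x₂ y₁ y₂ - 1) * u₁ a b x₁ x₂ y₁ y₂ =
      (v₂ a b x₁ x₂ y₂ - y₂) * u₂ a b x₁ x₂ y₁ y₂ := by
  -- `field_simp` meets the denominator in this commuted form
  have hden' : y₂ * x₂ - x₁ - b + 1 ≠ 0 := by rwa [mul_comm]
  unfold u₁ u₂ v₂ den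
  field_simp
  ring

end Smap

theorem stmt11 (a b x₁ x₂ y₁ y₂ : ℂ) (hx₂ : x₂ ≠ 0)
    (hden : x₂ * y₂ - x₁ - b + 1 ≠ 0)
    (hu₂ : -(a * (x₂ + y₁) ^ 2 +
        (b * x₂ + y₁ * y₂ * x₂ - x₁ * y₁ + y₁) *
          (x₂ * (b + y₁ * y₂ - 1) - x₁ * y₁)) /
        (x₂ * (x₂ * y₂ - x₁ - b + 1)) ≠ 0) :
    ∀ ζ : ℂ,
      L1mat
        (y₂ * y₁ - x₁ * y₁ / x₂ +
          (a + b * (x₂ * y₂ - x₁)) * (x₂ + y₁) / (x₂ * (x₂ * y₂ - x₁ - b + 1)))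
        (-(a * (x₂ + y₁) ^ 2 +
            (b * x₂ + y₁ * y₂ * x₂ - x₁ * y₁ + y₁) *
              (x₂ * (b + y₁ * y₂ - 1) - x₁ * y₁)) /
          (x₂ * (x₂ * y₂ - x₁ - b + 1))) a ζ *
      L2mat (x₂ + y₁)
        (x₁ / x₂ - (a + b * (x₂ * y₂ - x₁)) / (x₂ * (x₂ * y₂ - x₁ - b + 1))) b ζ =
      L2mat y₁ y₂ b ζ * L1mat x₁ x₂ a ζ :=
  L1mat_mul_L2mat_eq_L2mat_mul_L1mat (u₁ := Smap.u₁ a b x₁ x₂ y₁ y₂)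
    (u₂ := Smap.u₂ a b x₁ x₂ y₁ y₂) (v₁ := Smap.v₁ x₂ y₁) (v₂ := Smap.v₂ a b x₁ x₂ y₂) rfl
    (Smap.u₁_eq hx₂) (Smap.u₂_eq hx₂ hden) (Smap.v₂_mul_eq hx₂ hden) hu₂ (Smap.compatibility hx₂ hden)
end
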